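/- (ℂ*)² is not of ds²_FS-limit type, where ds²_FS is the restriction to (ℂ*)² of the Fubini–Study metric on ℙ²(ℂ). -/

import Mathlib

/-!
Take `ψ ζ = (e^{iζ}, e^{ζ²})` and the family `f_n z = ψ (n z)` on `ℂ`. It is not normal, since
`|e^{n²}|` blows up at `z = 1`, and has no compactly divergent sequence, since `f_n 0 = (1, 1)`.
A rescaling `f_{m_j} (p_j + ρ_j ξ)` equals `ψ (c_j + λ_j ξ)` with `λ_j = m_j ρ_j` real. If it
converges to a map into `(ℂ*)²`, the moduli of the limit at `ξ = ± i` and `ξ = 0` pin down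
`λ_j`, `Im c_j` and `Re c_j²`, so `λ_j → λ` and a subsequence `c_j → c`: the limit is
`ψ (c + λ ξ)`. It is constant if `λ = 0`. Otherwise, by Cauchy–Schwarz the Fubini–Study length
is at least `|v₂| / (1 + |w|²)`, and on the diagonal `ζ = t (1 + i)` the coordinates of `ψ`
stay bounded while `|d/dξ e^{ζ²}| = 2 |λ| |ζ|` grows, so the limit is not a Brody curve.
-/

open Filter Topology

/-- `(ℂ*)²` realized as the standard affine chart points of `ℙ²(ℂ)` with both coordinates
nonzero. -/
def CstarSq : Set (ℂ × ℂ) := {w | w.1 ≠ 0 ∧ w.2 ≠ 0}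

/-- The length of the tangent vector `v` at the point `w` for the Fubini–Study metric of
`ℙ²(ℂ)` written in the standard affine chart `ℂ² ⊆ ℙ²(ℂ)` (which contains `(ℂ*)²`):
`|v|²_FS = ((1+‖w‖²)‖v‖² − |⟨v,w⟩|²) / (1+‖w‖²)²`. -/
noncomputable def fsLen (w v : ℂ × ℂ) : ℝ :=
  Real.sqrt (((1 + ‖w.1‖ ^ 2 + ‖w.2‖ ^ 2) * (‖v.1‖ ^ 2 + ‖v.2‖ ^ 2) -
      ‖v.1 * starRingEnd ℂ w.1 + v.2 * starRingEnd ℂ w.2‖ ^ 2) /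
    (1 + ‖w.1‖ ^ 2 + ‖w.2‖ ^ 2) ^ 2)

/-- Compact divergence for sequences of maps from a plane domain into `(ℂ*)²`. -/
def CompactlyDivergent (u : ℕ → ℂ → ℂ × ℂ) (Δ : Set ℂ) : Prop :=
  ∀ K : Set ℂ, K ⊆ Δ → IsCompact K → ∀ L : Set (ℂ × ℂ), L ⊆ CstarSq → IsCompact L →
    ∃ j₀, ∀ j ≥ j₀, ∀ z ∈ K, u j z ∉ L

/-- Normality for families of maps from a plane domain into `(ℂ*)²`. -/
def IsNormalFamily (𝓕 : Set (ℂ → ℂ × ℂ)) (Δ : Set ℂ) : Prop :=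
  ∀ u : ℕ → ℂ → ℂ × ℂ, (∀ j, u j ∈ 𝓕) →
    ∃ (φ : ℕ → ℕ) (g : ℂ → ℂ × ℂ), StrictMono φ ∧
      TendstoLocallyUniformlyOn (fun j => u (φ j)) g atTop Δ

/-- `(ℂ*)²` is of `ds²_FS`-limit type if every non-normal family of holomorphic maps of a
domain `Δ ⊆ ℂ` into `(ℂ*)²` with no compactly divergent sequence admits a rescaling
`ξ ↦ f j (p j + ρ j ξ)` converging locally uniformly on `ℂ` to a non-constant
`ds²_FS`-Brody curve in `(ℂ*)²`. -/
def IsFSLimitType : Prop :=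
  ∀ Δ : Set ℂ, IsOpen Δ → IsConnected Δ →
    ∀ 𝓕 : Set (ℂ → ℂ × ℂ),
      (∀ f ∈ 𝓕, DifferentiableOn ℂ f Δ ∧ ∀ z ∈ Δ, f z ∈ CstarSq) →
      ¬IsNormalFamily 𝓕 Δ →
      (∀ u : ℕ → ℂ → ℂ × ℂ, (∀ j, u j ∈ 𝓕) → ¬CompactlyDivergent u Δ) →
      ∃ (p : ℕ → ℂ) (p₀ : ℂ) (fs : ℕ → ℂ → ℂ × ℂ) (ρ : ℕ → ℝ) (g : ℂ → ℂ × ℂ),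
        (∀ j, p j ∈ Δ) ∧ p₀ ∈ Δ ∧ Tendsto p atTop (𝓝 p₀) ∧
        (∀ j, fs j ∈ 𝓕) ∧ (∀ j, 0 < ρ j) ∧ Tendsto ρ atTop (𝓝 0) ∧
        TendstoLocallyUniformly (fun (j : ℕ) (ξ : ℂ) => fs j (p j + (ρ j : ℂ) * ξ))
          g atTop ∧
        Differentiable ℂ g ∧ (∀ ξ, g ξ ∈ CstarSq) ∧ ¬(∃ y, ∀ ξ, g ξ = y) ∧
        ∃ c : ℝ, ∀ ξ, fsLen (g ξ) (deriv g ξ) ≤ c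

lemma norm_snd_div_le_fsLen (w v : ℂ × ℂ) :
    ‖v.2‖ / (1 + ‖w.1‖ ^ 2 + ‖w.2‖ ^ 2) ≤ fsLen w v := by
  have hcs : ‖v.1 * starRingEnd ℂ w.1 + v.2 * starRingEnd ℂ w.2‖ ^ 2 ≤
      (‖v.1‖ ^ 2 + ‖v.2‖ ^ 2) * (‖w.1‖ ^ 2 + ‖w.2‖ ^ 2) := by
    have h := norm_add_le (v.1 * starRingEnd ℂ w.1) (v.2 * starRingEnd ℂ w.2)
    rw [norm_mul, norm_mul, Complex.norm_conj, Complex.norm_conj] at h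
    nlinarith [pow_le_pow_left₀ (norm_nonneg _) h 2,
      sq_nonneg (‖v.1‖ * ‖w.2‖ - ‖v.2‖ * ‖w.1‖)]
  apply Real.le_sqrt_of_sq_le
  rw [div_pow]
  gcongr
  nlinarith [sq_nonneg ‖v.1‖]

lemma tendsto_re_of_tendsto_cexp {α : Type*} {l : Filter α} {w : α → ℂ} {a : ℂ} (ha : a ≠ 0)
    (h : Tendsto (fun j => Complex.exp (w j)) l (𝓝 a)) :
    Tendsto (fun j => (w j).re) l (𝓝 (Real.log ‖a‖)) := by
  refine ((Real.continuousAt_log (norm_ne_zero_iff.2 ha)).tendsto.comp h.norm).congr fun j => ?_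
  simp [Complex.norm_exp]

noncomputable def profileCurve (ζ : ℂ) : ℂ × ℂ :=
  (Complex.exp (Complex.I * ζ), Complex.exp (ζ ^ 2))

lemma profileCurve_mem_CstarSq (ζ : ℂ) : profileCurve ζ ∈ CstarSq :=
  ⟨Complex.exp_ne_zero _, Complex.exp_ne_zero _⟩

lemma hasDerivAt_profileCurve (ζ : ℂ) :
    HasDerivAt profileCurve
      (Complex.I * Complex.exp (Complex.I * ζ), 2 * ζ * Complex.exp (ζ ^ 2)) ζ := by
  have h1 := ((hasDerivAt_id ζ).const_mul Complex.I).cexp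
  have h2 := (hasDerivAt_pow 2 ζ).cexp
  exact (h1.prodMk h2).congr_deriv (by simp [mul_comm])

lemma differentiable_profileCurve : Differentiable ℂ profileCurve :=
  fun ζ => (hasDerivAt_profileCurve ζ).differentiableAt

lemma exists_lt_fsLen_deriv_profileCurve_affine (c : ℂ) {a : ℂ} (ha : a ≠ 0) (C : ℝ) :
    ∃ ξ, C < fsLen (profileCurve (c + a * ξ))
      (deriv (fun ξ => profileCurve (c + a * ξ)) ξ) := by
  have ha' : 0 < ‖a‖ := norm_pos_iff.2 ha
  -- along the diagonal `ζ = t (1 + i)` both coordinates stay bounded while `|ζ| ≥ t`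
  set t : ℝ := 3 * |C| / (2 * ‖a‖) + 1
  have ht : 0 ≤ t := by positivity
  set ζ : ℂ := t * (1 + Complex.I)
  refine ⟨(ζ - c) / a, ?_⟩
  have hζ : c + a * ((ζ - c) / a) = ζ := by field_simp; ring
  have hderiv : deriv (fun ξ => profileCurve (c + a * ξ)) ((ζ - c) / a) =
      a • (Complex.I * Complex.exp (Complex.I * ζ), 2 * ζ * Complex.exp (ζ ^ 2)) := by
    have haff : HasDerivAt (fun ξ => c + a * ξ) a ((ζ - c) / a) := by
      simpa using ((hasDerivAt_id _).const_mul a).const_add c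
    have := ((hasDerivAt_profileCurve _).scomp _ haff).deriv
    rwa [hζ] at this
  have h1 : ‖Complex.exp (Complex.I * ζ)‖ ≤ 1 := by
    rw [Complex.norm_exp, Real.exp_le_one_iff]; simp [ζ, ht]
  have h2 : ‖Complex.exp (ζ ^ 2)‖ = 1 := by
    rw [Complex.norm_exp, Real.exp_eq_one_iff]; simp [ζ, sq]
  have h3 : t ≤ ‖ζ‖ := by simpa [ζ, abs_of_nonneg ht] using Complex.abs_re_le_norm ζ
  refine lt_of_lt_of_le ?_ (norm_snd_div_le_fsLen _ _)
  rw [hζ, hderiv]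
  simp only [profileCurve, Prod.smul_snd, smul_eq_mul, norm_mul, h2, Complex.norm_two]
  rw [lt_div_iff₀ (by positivity)]
  have ht' : |C| * 3 < ‖a‖ * (2 * t) := by
    simp only [t]; field_simp; nlinarith
  have hx : ‖Complex.exp (Complex.I * ζ)‖ ^ 2 ≤ 1 := pow_le_one₀ (norm_nonneg _) h1
  nlinarith [le_abs_self C, mul_le_mul_of_nonneg_left h3 ha'.le,
    mul_le_mul_of_nonneg_left hx (abs_nonneg C),
    mul_nonneg (sub_nonneg.2 (le_abs_self C)) (sq_nonneg ‖Complex.exp (Complex.I * ζ)‖)]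

def profileFamily : Set (ℂ → ℂ × ℂ) :=
  Set.range fun (n : ℕ) (z : ℂ) => profileCurve (n * z)

lemma differentiableOn_and_mapsTo_of_mem_profileFamily {f : ℂ → ℂ × ℂ}
    (hf : f ∈ profileFamily) (Δ : Set ℂ) : DifferentiableOn ℂ f Δ ∧ ∀ z ∈ Δ, f z ∈ CstarSq := by
  obtain ⟨n, rfl⟩ := hf
  exact ⟨(differentiable_profileCurve.comp (differentiable_id.const_mul _)).differentiableOn,
    fun z _ => profileCurve_mem_CstarSq _⟩

lemma tendsto_norm_profileCurve_snd_natCast :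
    Tendsto (fun n : ℕ => ‖(profileCurve n).2‖) atTop atTop := by
  have h : Tendsto (fun x : ℝ => Real.exp (x ^ 2)) atTop atTop :=
    Real.tendsto_exp_atTop.comp (tendsto_pow_atTop two_ne_zero)
  refine (h.comp tendsto_natCast_atTop_atTop).congr fun n => ?_
  simp [profileCurve, Complex.norm_exp, ← Complex.ofReal_natCast, ← Complex.ofReal_pow]

lemma not_isNormalFamily_profileFamily {Δ : Set ℂ} (h1 : (1 : ℂ) ∈ Δ) :
    ¬IsNormalFamily profileFamily Δ := by
  intro hN
  obtain ⟨φ, g, hφ, hg⟩ := hN _ fun n => Set.mem_range_self n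
  have hlim : Tendsto (fun j => ‖(profileCurve (φ j * 1)).2‖) atTop (𝓝 ‖(g 1).2‖) :=
    ((continuous_snd.tendsto _).comp (hg.tendsto_at h1)).norm
  simp only [mul_one] at hlim
  exact not_tendsto_nhds_of_tendsto_atTop
    (tendsto_norm_profileCurve_snd_natCast.comp hφ.tendsto_atTop) _ hlim

lemma not_compactlyDivergent_of_mem_profileFamily {Δ : Set ℂ} (h0 : (0 : ℂ) ∈ Δ)
    {u : ℕ → ℂ → ℂ × ℂ} (hu : ∀ j, u j ∈ profileFamily) : ¬CompactlyDivergent u Δ := by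
  intro hcd
  obtain ⟨j₀, hj⟩ := hcd {0} (by simpa using h0) isCompact_singleton {(1, 1)}
    (by simp [CstarSq]) isCompact_singleton
  obtain ⟨n, hn⟩ := hu j₀
  exact hj j₀ le_rfl 0 rfl (by simp [← hn, profileCurve])

section ProfileLimits

variable {c : ℕ → ℂ} {lam : ℕ → ℝ} {g : ℂ → ℂ × ℂ}

lemma exists_tendsto_and_isBounded_of_tendsto_profileCurve (hg : ∀ ξ, g ξ ∈ CstarSq)
    (h : ∀ ξ, Tendsto (fun j => profileCurve (c j + lam j * ξ)) atTop (𝓝 (g ξ))) :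
    (∃ lam₀, Tendsto lam atTop (𝓝 lam₀)) ∧ Bornology.IsBounded (Set.range c) := by
  have hfst (ξ : ℂ) :=
    tendsto_re_of_tendsto_cexp (hg ξ).1 ((continuous_fst.tendsto _).comp (h ξ))
  have hsnd := tendsto_re_of_tendsto_cexp (hg 0).2 ((continuous_snd.tendsto _).comp (h 0))
  have hI : Tendsto (fun j => -(c j).im - lam j) atTop _ :=
    (hfst Complex.I).congr fun j => by simp [Complex.mul_re]; ring
  have hnegI : Tendsto (fun j => -(c j).im + lam j) atTop _ :=
    (hfst (-Complex.I)).congr fun j => by simp [Complex.mul_re]; ring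
  have hre : Tendsto (fun j => (c j).re ^ 2 - (c j).im ^ 2) atTop _ :=
    hsnd.congr fun j => by simp [sq, Complex.mul_re]
  have him : Tendsto (fun j => (c j).im) atTop _ :=
    ((hI.add hnegI).div_const (-2)).congr fun j => by ring
  refine ⟨⟨_, ((hnegI.sub hI).div_const 2).congr fun j => by ring⟩, ?_⟩
  have hnorm : Tendsto (fun j => ‖c j‖) atTop _ :=
    ((Real.continuous_sqrt.tendsto _).comp (hre.add ((him.pow 2).const_mul 2))).congr
      fun j => by simp [Complex.norm_def, Complex.normSq_apply]; ring_nf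
  obtain ⟨M, hM⟩ := hnorm.bddAbove_range
  exact isBounded_iff_forall_norm_le.2 ⟨M, by rintro _ ⟨j, rfl⟩; exact hM ⟨j, rfl⟩⟩

lemma exists_eq_profileCurve_affine_of_tendsto (hg : ∀ ξ, g ξ ∈ CstarSq)
    (h : ∀ ξ, Tendsto (fun j => profileCurve (c j + lam j * ξ)) atTop (𝓝 (g ξ))) :
    ∃ (c₀ : ℂ) (lam₀ : ℝ), g = fun ξ => profileCurve (c₀ + lam₀ * ξ) := by
  obtain ⟨⟨lam₀, hlam⟩, hc⟩ := exists_tendsto_and_isBounded_of_tendsto_profileCurve hg h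
  obtain ⟨c₀, -, φ, hφ, hcφ⟩ := tendsto_subseq_of_bounded hc fun j => Set.mem_range_self j
  refine ⟨c₀, lam₀, funext fun ξ => tendsto_nhds_unique ((h ξ).comp hφ.tendsto_atTop) ?_⟩
  have hlamφ := (Complex.continuous_ofReal.tendsto _).comp (hlam.comp hφ.tendsto_atTop)
  exact (differentiable_profileCurve.continuous.tendsto _).comp
    (hcφ.add (hlamφ.mul_const ξ))

end ProfileLimits

/-- `(ℂ*)²` is not of `ds²_FS`-limit type, where `ds²_FS` is the restriction
to `(ℂ*)²` of the Fubini–Study metric of `ℙ²(ℂ)`. -/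
theorem CstarSq_not_FS_limit_type : ¬IsFSLimitType := by
  intro h
  obtain ⟨p, -, fs, ρ, g, -, -, -, hfs, -, -, hconv, -, hgmem, hgnc, C, hC⟩ :=
    h Set.univ isOpen_univ isConnected_univ profileFamily
      (fun f hf => differentiableOn_and_mapsTo_of_mem_profileFamily hf _)
      (not_isNormalFamily_profileFamily (Set.mem_univ 1))
      (fun u hu => not_compactlyDivergent_of_mem_profileFamily (Set.mem_univ 0) hu)
  choose m hm using hfs
  have hlim (ξ : ℂ) : Tendsto (fun j => profileCurve (m j * p j + (m j * ρ j : ℝ) * ξ))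
      atTop (𝓝 (g ξ)) :=
    ((tendstoLocallyUniformlyOn_univ.2 hconv).tendsto_at (Set.mem_univ ξ)).congr fun j => by
      simp only [← hm]; push_cast; ring_nf
  obtain ⟨c₀, lam₀, rfl⟩ := exists_eq_profileCurve_affine_of_tendsto hgmem hlim
  rcases eq_or_ne lam₀ 0 with rfl | hlam₀
  · exact hgnc ⟨profileCurve c₀, fun ξ => by simp⟩
  · obtain ⟨ξ, hξ⟩ := exists_lt_fsLen_deriv_profileCurve_affine c₀
      (Complex.ofReal_ne_zero.2 hlam₀) C
    exact (hC ξ).not_gt hξ
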